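/- Let G be a connected finite simple graph that is not complete. Then there exists an optimal treedepth decomposition T of G (a rooted tree of height td(G)) whose top separator ts(T) is a minimal separator of G. -/

import Mathlib

open SimpleGraph

attribute [local instance] Classical.propDecidable

noncomputable section

/-- A rooted forest on a vertex type `V`, given by a parent map together with a
depth function (the depth of a root is `1`, and the depth of a child is the depth
of its parent plus one).  The existence of such a depth function guarantees that
the parent map is acyclic, i.e. that the structure really is a rooted forest. -/
structure RootedForest (V : Type) where
  parent : V → Option V
  depth : V → ℕ
  depth_root : ∀ v, parent v = none → depth v = 1
  depth_parent : ∀ v u, parent v = some u → depth v = depth u + 1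

namespace RootedForest

variable {V : Type}

/-- `T.Ancestor u v` means that `u` is a (reflexive) ancestor of `v` in `T`. -/
def Ancestor (T : RootedForest V) (u v : V) : Prop :=
  Relation.ReflTransGen (fun a b => T.parent a = some b) v u

/-- The height of a rooted forest: the maximum number of vertices on a
root-to-leaf path of one of its trees (0 for the empty forest). -/
def height (T : RootedForest V) [Fintype V] : ℕ :=
  Finset.univ.sup T.depth

/-- The number of children of a vertex. -/
def childCount (T : RootedForest V) [Fintype V] (u : V) : ℕ :=
  (Finset.univ.filter (fun v => T.parent v = some u)).card

/-- The set of vertices of depth at most `d` in `T`. -/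
def top (T : RootedForest V) (d : ℕ) : Set V := {v | T.depth v ≤ d}

/-- `T` is a rooted tree if it has exactly one root. -/
def IsTree (T : RootedForest V) : Prop := ∃! r, T.parent r = none

/-- The top separator of a rooted tree `T`: if no vertex of `T` has more than one
child (i.e. `T` is a path), it is all of `V(T)`; otherwise it is the set of
vertices of depth at most the depth of the minimum-depth vertex having more than
one child. -/
def topSep (T : RootedForest V) [Fintype V] : Finset V :=
  if _ : ∃ p, 2 ≤ T.childCount p then
    Finset.univ.filter
      (fun v => T.depth v ≤ sInf {d | ∃ p, 2 ≤ T.childCount p ∧ T.depth p = d})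
  else Finset.univ

end RootedForest

/-- `T` is a treedepth decomposition of `G`: a rooted forest on the vertex set of
`G` such that the endpoints of every edge of `G` are in ancestor-descendant
relation. -/
def IsTDDecomp {V : Type} (G : SimpleGraph V) (T : RootedForest V) : Prop :=
  ∀ u v, G.Adj u v → T.Ancestor u v ∨ T.Ancestor v u

/-- The treedepth of a finite graph: the minimum height of a treedepth
decomposition of `G`. -/
def treedepth {V : Type} [Fintype V] (G : SimpleGraph V) : ℕ :=
  sInf {h | ∃ T : RootedForest V, IsTDDecomp G T ∧ T.height = h}

/-- `(T, f)` is a tree decomposition of `G`. -/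
def IsTreeDecomp {V ι : Type} (G : SimpleGraph V) (T : SimpleGraph ι)
    (f : ι → Finset V) : Prop :=
  T.IsTree ∧
  (∀ v, ∃ i, v ∈ f i) ∧
  (∀ u v, G.Adj u v → ∃ i, u ∈ f i ∧ v ∈ f i) ∧
  (∀ v, (T.induce {i | v ∈ f i}).Connected)

/-- The treewidth of a finite graph: the minimum over all tree decompositions of
(maximum bag size minus one), phrased as the least `w` such that `G` has a tree
decomposition all of whose bags have at most `w + 1` vertices. -/
def treewidth {V : Type} [Fintype V] (G : SimpleGraph V) : ℕ :=
  sInf {w | ∃ (ι : Type) (_ : Fintype ι) (T : SimpleGraph ι) (f : ι → Finset V),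
    IsTreeDecomp G T f ∧ ∀ i, (f i).card ≤ w + 1}

/-- `S` is an `a`-`b` separator of `G`: `a, b ∉ S` and every walk from `a` to `b`
meets `S` (i.e. `a` and `b` lie in different connected components of `G ∖ S`). -/
def IsABSep {V : Type} (G : SimpleGraph V) (a b : V) (S : Finset V) : Prop :=
  a ∉ S ∧ b ∉ S ∧ ∀ w : G.Walk a b, ∃ x ∈ w.support, x ∈ S

/-- `S` is a minimal separator of `G`: for some vertices `a, b`, it is an
`a`-`b` separator no proper subset of which is an `a`-`b` separator. -/
def IsMinSep {V : Type} (G : SimpleGraph V) (S : Finset V) : Prop :=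
  ∃ a b, IsABSep G a b S ∧ ∀ S' ⊂ S, ¬ IsABSep G a b S'

/-- The grid graph `P_m × P_n`, with vertex set
`{(i,j) : 1 ≤ i ≤ n, 1 ≤ j ≤ m}` and edges between vertices at ℓ1-distance 1. -/
def gridGraph (n m : ℕ) : SimpleGraph (Fin n × Fin m) where
  Adj a b := Nat.dist a.1.val b.1.val + Nat.dist a.2.val b.2.val = 1
  symm := by
    constructor
    intro a b h
    try dsimp only at h ⊢
    rwa [Nat.dist_comm b.1.val, Nat.dist_comm b.2.val]
  loopless := by constructor; intro a h; simp [Nat.dist_self] at h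


/-- Vertices of the broom: grid vertices plus, for each row `i`, a path on `2^k - 1` vertices. -/
abbrev BroomV (n m k : ℕ) : Type := (Fin n × Fin m) ⊕ (Fin n × Fin (2 ^ k - 1))

/-- The broom `B_{n,m,k}`. -/
def broom (n m k : ℕ) : SimpleGraph (BroomV n m k) :=
  SimpleGraph.fromRel (fun x y =>
    match x, y with
    | .inl a, .inl b => (gridGraph n m).Adj a b
    | .inl a, .inr b => a.1 = b.1 ∧ a.2.val = m - 1 ∧ b.2.val = 0
    | .inr a, .inr b => a.1 = b.1 ∧ a.2.val + 1 = b.2.val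
    | .inr _, .inl _ => False)

/-- Vertices of the double broom: grid vertices plus, for each row `i`, a path
attached at `(i,1)` (first summand) and a path attached at `(i,m)` (second summand). -/
abbrev DBroomV (n m k : ℕ) : Type :=
  (Fin n × Fin m) ⊕ (Fin n × Fin (2 ^ k - 1)) ⊕ (Fin n × Fin (2 ^ k - 1))

/-- The double broom `D_{n,m,k}`. -/
def dbroom (n m k : ℕ) : SimpleGraph (DBroomV n m k) :=
  SimpleGraph.fromRel (fun x y =>
    match x, y with
    | .inl a, .inl b => (gridGraph n m).Adj a b
    | .inl a, .inr (.inl b) => a.1 = b.1 ∧ a.2.val = 0 ∧ b.2.val = 0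
    | .inl a, .inr (.inr b) => a.1 = b.1 ∧ a.2.val = m - 1 ∧ b.2.val = 0
    | .inr (.inl a), .inr (.inl b) => a.1 = b.1 ∧ a.2.val + 1 = b.2.val
    | .inr (.inr a), .inr (.inr b) => a.1 = b.1 ∧ a.2.val + 1 = b.2.val
    | _, _ => False)

/-- Vertices of the graph `G_{n,m,k,l}`: grid vertices, plus a path on `2^k - 1`
vertices for every triple (row `i`, end `e ∈ {1,m}`, vertex `w ∈ W`), plus the
set `W` of `l` new vertices. -/
abbrev CornerV (n m k l : ℕ) : Type :=
  (Fin n × Fin m) ⊕ ((Fin n × Fin 2 × Fin l) × Fin (2 ^ k - 1)) ⊕ Fin l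

/-- The graph `G_{n,m,k,l}`. -/
def corner (n m k l : ℕ) : SimpleGraph (CornerV n m k l) :=
  SimpleGraph.fromRel (fun x y =>
    match x, y with
    | .inl a, .inl b => (gridGraph n m).Adj a b
    | .inl a, .inr (.inl (⟨i, e, _⟩, t)) =>
        a.1 = i ∧ t.val = 0 ∧
          ((e.val = 0 ∧ a.2.val = 0) ∨ (e.val = 1 ∧ a.2.val = m - 1))
    | .inr (.inl (p, t)), .inr (.inl (q, s)) => p = q ∧ t.val + 1 = s.val
    | .inr (.inl (⟨_, _, w⟩, t)), .inr (.inr w') => w = w' ∧ t.val = 2 ^ k - 2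
    | _, _ => False)

/-- `H` is a minor of `G`: there are pairwise disjoint connected branch sets in
`G`, one for each vertex of `H`, such that adjacent vertices of `H` have
adjacent branch sets. -/
def IsMinor {W V : Type} (H : SimpleGraph W) (G : SimpleGraph V) : Prop :=
  ∃ B : W → Set V,
    (∀ w, (G.induce (B w)).Connected) ∧
    (∀ w w', w ≠ w' → Disjoint (B w) (B w')) ∧
    (∀ w w', H.Adj w w' → ∃ u ∈ B w, ∃ v ∈ B w', G.Adj u v)

/-- A graph is chordal if it has no induced cycle of length four or more. -/
def IsChordal {V : Type} (G : SimpleGraph V) : Prop :=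
  ∀ c : ℕ, 4 ≤ c → IsEmpty (SimpleGraph.cycleGraph c ↪g G)

/-- A graph is a cograph if it has no induced path on four vertices. -/
def IsCograph {V : Type} (G : SimpleGraph V) : Prop :=
  IsEmpty (SimpleGraph.pathGraph 4 ↪g G)

/-- A graph is outerplanar iff it contains neither `K₄` nor `K_{2,3}` as a minor. -/
def IsOuterplanar {V : Type} (G : SimpleGraph V) : Prop :=
  ¬ IsMinor (⊤ : SimpleGraph (Fin 4)) G ∧
  ¬ IsMinor (completeBipartiteGraph (Fin 2) (Fin 3)) G

/-- The graph obtained from `G'` and the path on `p` vertices by adding a single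
edge between `u ∈ V(G')` and a path vertex `v`. -/
def attachPath {V' : Type} (G' : SimpleGraph V') (p : ℕ) (u : V') (v : Fin p) :
    SimpleGraph (V' ⊕ Fin p) :=
  SimpleGraph.fromRel (fun x y =>
    match x, y with
    | .inl a, .inl b => G'.Adj a b
    | .inr a, .inr b => a.val + 1 = b.val
    | .inl a, .inr b => a = u ∧ b = v
    | .inr _, .inl _ => False)

/-!
An optimal decomposition `T` of a connected graph is a tree, and it branches somewhere: a path
would have height `|V|`, while two non-adjacent vertices placed at the bottom of a path through
all other vertices give height `|V| - 1`. Let `p` be a branching vertex of least depth. Every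
vertex is comparable with `p`, and the ancestors of `p` separate two children `c₁, c₂` of `p`;
shrink them to a minimal `c₁`–`c₂` separator `S`. Now rebuild the decomposition: `S` on top as a
path, and below it every `v ∉ S` under those of its `T`-ancestors that lie in its component of
`G - S`. The new ancestors of `v` lie in `S ∪ anc_T(v)`, which is contained in `anc_T(p)` or in
`anc_T(v)`, so the height does not grow; and the components of `c₁` and `c₂` hang as two subtrees
from the last vertex of `S`, which makes `S` the top separator.
-/

open Finset

namespace RootedForest

variable {V : Type} (T : RootedForest V)

lemma ancestor_refl (v : V) : T.Ancestor v v := Relation.ReflTransGen.refl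

variable {T}

lemma Ancestor.trans {u v w : V} (huv : T.Ancestor u v) (hvw : T.Ancestor v w) :
    T.Ancestor u w :=
  Relation.ReflTransGen.trans hvw huv

lemma ancestor_of_parent_eq {u v : V} (h : T.parent v = some u) : T.Ancestor u v :=
  Relation.ReflTransGen.single h

lemma Ancestor.eq_or_ancestor_of_parent_eq {u v p : V} (h : T.Ancestor u v)
    (hp : T.parent v = some p) : u = v ∨ T.Ancestor u p := by
  rcases Relation.ReflTransGen.cases_head h with h | ⟨w, hw, h⟩
  · exact Or.inl h.symm
  · rw [hp, Option.some_inj] at hw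
    exact Or.inr (hw ▸ h)

lemma Ancestor.eq_of_parent_eq_none {u v : V} (h : T.Ancestor u v) (hv : T.parent v = none) :
    u = v := by
  rcases Relation.ReflTransGen.cases_head h with h | ⟨w, hw, -⟩
  · exact h.symm
  · simp [hv] at hw

lemma Ancestor.exists_child {u v : V} (h : T.Ancestor u v) (hne : u ≠ v) :
    ∃ c, T.parent c = some u ∧ T.Ancestor c v := by
  rcases Relation.ReflTransGen.cases_tail h with h | ⟨c, hc, hcu⟩
  · exact absurd h hne
  · exact ⟨c, hcu, hc⟩

lemma Ancestor.depth_le {u v : V} (h : T.Ancestor u v) : T.depth u ≤ T.depth v := by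
  induction h with
  | refl => rfl
  | tail _ hstep ih => rw [T.depth_parent _ _ hstep] at ih; omega

lemma Ancestor.depth_lt {u v : V} (h : T.Ancestor u v) (hne : u ≠ v) :
    T.depth u < T.depth v := by
  obtain ⟨c, hc, hcv⟩ := h.exists_child hne
  have := T.depth_parent c u hc
  have := hcv.depth_le
  omega

lemma Ancestor.antisymm {u v : V} (huv : T.Ancestor u v) (hvu : T.Ancestor v u) : u = v := by
  by_contra hne
  have := huv.depth_lt hne
  have := hvu.depth_lt (Ne.symm hne)
  omega

lemma Ancestor.total {u w v : V} (hu : T.Ancestor u v) (hw : T.Ancestor w v) :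
    T.Ancestor u w ∨ T.Ancestor w u :=
  (Relation.ReflTransGen.total_of_right_unique
    (fun _ _ _ hb hc => Option.some.inj (hb.symm.trans hc)) hu hw).symm

lemma exists_root_ancestor (v : V) : ∃ r, T.Ancestor r v ∧ T.parent r = none := by
  induction hd : T.depth v using Nat.strong_induction_on generalizing v with
  | _ d ih =>
    cases hp : T.parent v with
    | none => exact ⟨v, T.ancestor_refl v, hp⟩
    | some u =>
      obtain ⟨r, hru, hr⟩ := ih (T.depth u) (by rw [← hd, T.depth_parent v u hp]; omega) u rfl
      exact ⟨r, hru.trans (ancestor_of_parent_eq hp), hr⟩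

lemma IsTree.ancestor_of_parent_eq_none (hT : T.IsTree) {r : V} (hr : T.parent r = none)
    (v : V) : T.Ancestor r v := by
  obtain ⟨r', hr'v, hr'⟩ := T.exists_root_ancestor v
  exact hT.unique hr hr' ▸ hr'v

variable [Fintype V]

variable (T) in
def ancestors (v : V) : Finset V := univ.filter (T.Ancestor · v)

@[simp]
lemma mem_ancestors {u v : V} : u ∈ T.ancestors v ↔ T.Ancestor u v := by
  simp [ancestors]

lemma card_ancestors (v : V) : #(T.ancestors v) = T.depth v := by
  induction hd : T.depth v using Nat.strong_induction_on generalizing v with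
  | _ d ih =>
    cases hp : T.parent v with
    | none =>
      rw [← hd, T.depth_root v hp, card_eq_one]
      refine ⟨v, Finset.ext fun u => ?_⟩
      simpa using ⟨fun h => h.eq_of_parent_eq_none hp, fun h => h ▸ T.ancestor_refl v⟩
    | some p =>
      have hdp := T.depth_parent v p hp
      have hanc : T.ancestors v = insert v (T.ancestors p) := by
        ext u
        simp only [mem_ancestors, mem_insert]
        refine ⟨fun h => h.eq_or_ancestor_of_parent_eq hp, ?_⟩
        rintro (rfl | h)
        exacts [T.ancestor_refl u, h.trans (ancestor_of_parent_eq hp)]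
      have hv : v ∉ T.ancestors p := fun h => by
        have := (mem_ancestors.mp h).depth_le
        omega
      rw [hanc, card_insert_of_notMem hv, ih (T.depth p) (by omega) p rfl, ← hd, hdp]

lemma depth_le_height (v : V) : T.depth v ≤ T.height :=
  le_sup (mem_univ v)

variable (T) in
lemma exists_minimal_ancestor {P : V → Prop} {c : V} (hc : P c) :
    ∃ r, P r ∧ ∀ u, P u → T.Ancestor u r → u = r := by
  obtain ⟨r, hr, hmin⟩ := (univ.filter P).exists_min_image T.depth ⟨c, by simpa using hc⟩
  refine ⟨r, by simpa using hr, fun u hu hur => by_contra fun hne => ?_⟩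
  exact (hur.depth_lt hne).not_ge (hmin u (by simpa using hu))

lemma eq_of_childCount_le_one {p a b : V} (h : T.childCount p ≤ 1)
    (ha : T.parent a = some p) (hb : T.parent b = some p) : a = b :=
  card_le_one.mp h a (by simpa using ha) b (by simpa using hb)

lemma exists_ne_of_two_le_childCount {p : V} (h : 2 ≤ T.childCount p) :
    ∃ a b, a ≠ b ∧ T.parent a = some p ∧ T.parent b = some p := by
  obtain ⟨a, ha, b, hb, hab⟩ := one_lt_card.mp h
  exact ⟨a, b, hab, by simpa using ha, by simpa using hb⟩

/-- Above its first branching vertex a rooted tree is a path. -/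
lemma IsTree.ancestor_of_depth_le (hT : T.IsTree) {u v : V}
    (hpath : ∀ w, T.depth w < T.depth u → T.childCount w ≤ 1) (h : T.depth u ≤ T.depth v) :
    T.Ancestor u v := by
  induction hd : T.depth u using Nat.strong_induction_on generalizing u with
  | _ d ih =>
    cases hp : T.parent u with
    | none => exact hT.ancestor_of_parent_eq_none hp v
    | some u' =>
      have hdu := T.depth_parent u u' hp
      have hu'v : T.Ancestor u' v :=
        ih _ (by omega) (fun w hw => hpath w (by omega)) (by omega) rfl
      obtain ⟨c, hc, hcv⟩ := hu'v.exists_child (by rintro rfl; omega)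
      rwa [eq_of_childCount_le_one (hpath u' (by omega)) hp hc]

lemma IsTree.height_eq_card (hT : T.IsTree) (hpath : ∀ w, T.childCount w ≤ 1) :
    T.height = Fintype.card V := by
  obtain ⟨r, -⟩ := hT.exists
  obtain ⟨v, -, hv⟩ := exists_mem_eq_sup univ ⟨r, mem_univ r⟩ T.depth
  have hanc : T.ancestors v = univ :=
    eq_univ_of_forall fun u => mem_ancestors.mpr <|
      hT.ancestor_of_depth_le (fun w _ => hpath w) (hv ▸ T.depth_le_height u)
  rw [height, hv, ← card_ancestors, hanc, card_univ]

lemma IsTree.exists_branching_trunk (hT : T.IsTree) (hbranch : ∃ p, 2 ≤ T.childCount p) :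
    ∃ p, 2 ≤ T.childCount p ∧ ∀ v, T.Ancestor v p ∨ T.Ancestor p v := by
  obtain ⟨p, hp, hmin⟩ := (univ.filter (2 ≤ T.childCount ·)).exists_min_image T.depth
    (by obtain ⟨p, hp⟩ := hbranch; exact ⟨p, mem_filter.mpr ⟨mem_univ p, hp⟩⟩)
  have hpath : ∀ w, T.depth w < T.depth p → T.childCount w ≤ 1 := fun w hw => by
    by_contra! h
    exact hw.not_ge (hmin w (mem_filter.mpr ⟨mem_univ w, h⟩))
  refine ⟨p, (mem_filter.mp hp).2, fun v => ?_⟩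
  rcases le_total (T.depth v) (T.depth p) with hvp | hpv
  · exact Or.inl (hT.ancestor_of_depth_le (fun w hw => hpath w (by omega)) hvp)
  · exact Or.inr (hT.ancestor_of_depth_le hpath hpv)

lemma topSep_eq_filter {p : V} (hp : 2 ≤ T.childCount p)
    (hinj : Set.InjOn T.depth {v | T.depth v ≤ T.depth p}) :
    T.topSep = univ.filter (T.depth · ≤ T.depth p) := by
  have hmin : ∀ w, 2 ≤ T.childCount w → T.depth p ≤ T.depth w := by
    intro w hw
    by_contra! hlt
    obtain ⟨a, b, hab, ha, hb⟩ := exists_ne_of_two_le_childCount hw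
    have hda := T.depth_parent a w ha
    have hdb := T.depth_parent b w hb
    exact hab (hinj (show T.depth a ≤ T.depth p by omega) (show T.depth b ≤ T.depth p by omega)
      (by omega))
  have hsInf : sInf {d | ∃ w, 2 ≤ T.childCount w ∧ T.depth w = d} = T.depth p :=
    le_antisymm (Nat.sInf_le ⟨p, hp, rfl⟩)
      (le_csInf ⟨_, p, hp, rfl⟩ (by rintro _ ⟨w, hw, rfl⟩; exact hmin w hw))
  rw [topSep, dif_pos ⟨p, hp⟩, hsInf]

end RootedForest

structure IsForestOrder {V : Type} (R : V → V → Prop) : Prop where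
  refl : ∀ v, R v v
  trans : ∀ {u v w}, R u v → R v w → R u w
  antisymm : ∀ {u v}, R u v → R v u → u = v
  total_of_rel : ∀ {u w v}, R u v → R w v → R u w ∨ R w u

namespace IsForestOrder

variable {V : Type} [Fintype V] {R : V → V → Prop}

lemma card_filter_lt (hR : IsForestOrder R) {u v : V} (huv : R u v) (hne : u ≠ v) :
    #(univ.filter (R · u)) < #(univ.filter (R · v)) := by
  refine card_lt_card ⟨fun w hw => ?_, fun h => hne ?_⟩
  · simp only [mem_filter, mem_univ, true_and] at hw ⊢
    exact hR.trans hw huv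
  · have : R v u := by simpa using h (by simpa using hR.refl v)
    exact hR.antisymm huv this

lemma filter_eq_erase_of_max (hR : IsForestOrder R) {u v : V} (huv : R u v) (hne : u ≠ v)
    (hmax : ∀ w, R w v → w ≠ v → #(univ.filter (R · w)) ≤ #(univ.filter (R · u))) :
    univ.filter (R · u) = (univ.filter (R · v)).erase v := by
  ext w
  simp only [mem_filter, mem_univ, true_and, mem_erase]
  constructor
  · intro hwu
    refine ⟨fun hwv => hne (hR.antisymm huv (hwv ▸ hwu)), hR.trans hwu huv⟩
  · rintro ⟨hwv, hw⟩
    rcases hR.total_of_rel hw huv with h | h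
    · exact h
    · by_cases hwu : u = w
      · exact hwu ▸ hR.refl u
      · have := hR.card_filter_lt h hwu
        have := hmax w hw hwv
        omega

end IsForestOrder

lemma isForestOrder_eq {V : Type} : IsForestOrder (@Eq V) where
  refl := Eq.refl
  trans := Eq.trans
  antisymm h _ := h
  total_of_rel huv hwv := Or.inl (huv.trans hwv.symm)

lemma RootedForest.isForestOrder_ancestor_and {V : Type} (T : RootedForest V)
    {r : V → V → Prop} (hr : Equivalence r) :
    IsForestOrder (fun u v => T.Ancestor u v ∧ r u v) where
  refl v := ⟨T.ancestor_refl v, hr.refl v⟩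
  trans huv hvw := ⟨huv.1.trans hvw.1, hr.trans huv.2 hvw.2⟩
  antisymm huv hvu := huv.1.antisymm hvu.1
  total_of_rel huv hwv := (huv.1.total hwv.1).imp (fun h => ⟨h, hr.trans huv.2 (hr.symm hwv.2)⟩)
    (fun h => ⟨h, hr.trans hwv.2 (hr.symm huv.2)⟩)

namespace RootedForest

variable {V : Type} [Fintype V] {R : V → V → Prop}

/-- A deepest strict predecessor of `v`: the depth of `u` will be `#{w | R w u}`. -/
def parentOfRel (R : V → V → Prop) (v : V) : Option V :=
  if h : ∃ u, R u v ∧ u ≠ v ∧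
      ∀ w, R w v → w ≠ v → #(univ.filter (R · w)) ≤ #(univ.filter (R · u)) then
    some h.choose
  else none

lemma parentOfRel_spec {u v : V} (h : parentOfRel R v = some u) :
    R u v ∧ u ≠ v ∧ ∀ w, R w v → w ≠ v → #(univ.filter (R · w)) ≤ #(univ.filter (R · u)) := by
  unfold parentOfRel at h
  split_ifs at h with hex
  exact Option.some_inj.mp h ▸ hex.choose_spec

lemma parentOfRel_eq_none_iff {v : V} : parentOfRel R v = none ↔ ∀ u, R u v → u = v := by
  unfold parentOfRel
  split_ifs with hex
  · obtain ⟨u, hu, hne, -⟩ := hex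
    simpa using ⟨u, hu, hne⟩
  · refine iff_of_true rfl fun u hu => ?_
    by_contra hne
    obtain ⟨w, hw, hmax⟩ := (univ.filter fun u => R u v ∧ u ≠ v).exists_max_image
      (fun u => #(univ.filter (R · u))) ⟨u, by simpa using ⟨hu, hne⟩⟩
    simp only [mem_filter, mem_univ, true_and] at hw hmax
    exact hex ⟨w, hw.1, hw.2, fun x hx hxv => hmax x ⟨hx, hxv⟩⟩

def ofForestOrder (hR : IsForestOrder R) : RootedForest V where
  parent := parentOfRel R
  depth v := #(univ.filter (R · v))
  depth_root v hv := by
    rw [card_eq_one]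
    refine ⟨v, Finset.ext fun u => ?_⟩
    simpa using ⟨parentOfRel_eq_none_iff.mp hv u, fun h => h ▸ hR.refl v⟩
  depth_parent v u h := by
    obtain ⟨huv, hne, hmax⟩ := parentOfRel_spec h
    rw [hR.filter_eq_erase_of_max huv hne hmax, card_erase_of_mem (by simpa using hR.refl v),
      Nat.sub_add_cancel (card_pos.mpr ⟨v, by simpa using hR.refl v⟩)]

variable (hR : IsForestOrder R)

lemma depth_ofForestOrder (v : V) : (ofForestOrder hR).depth v = #(univ.filter (R · v)) := rfl

lemma parent_ofForestOrder_eq_none_iff {v : V} :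
    (ofForestOrder hR).parent v = none ↔ ∀ u, R u v → u = v :=
  parentOfRel_eq_none_iff

lemma ancestor_ofForestOrder_iff {u v : V} : (ofForestOrder hR).Ancestor u v ↔ R u v := by
  constructor
  · intro h
    induction h with
    | refl => exact hR.refl v
    | tail _ hstep ih => exact hR.trans (parentOfRel_spec hstep).1 ih
  · induction hd : (ofForestOrder hR).depth v using Nat.strong_induction_on generalizing v with
    | _ d ih =>
      intro huv
      by_cases hne : u = v
      · exact hne ▸ (ofForestOrder hR).ancestor_refl u
      cases hp : (ofForestOrder hR).parent v with
      | none => exact absurd ((parent_ofForestOrder_eq_none_iff hR).mp hp u huv) hne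
      | some p =>
        obtain ⟨hpv, hpne, hmax⟩ := parentOfRel_spec hp
        have hup : R u p := by
          have : u ∈ univ.filter (R · p) := by
            rw [hR.filter_eq_erase_of_max hpv hpne hmax]
            simpa using ⟨hne, huv⟩
          simpa using this
        have := (ofForestOrder hR).depth_parent v p hp
        exact (ih _ (by omega) rfl hup).trans (ancestor_of_parent_eq hp)

lemma parent_ofForestOrder_eq_some {u v : V} (huv : R u v)
    (hd : (ofForestOrder hR).depth v = (ofForestOrder hR).depth u + 1) :
    (ofForestOrder hR).parent v = some u := by
  have hne : u ≠ v := by rintro rfl; omega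
  cases hp : (ofForestOrder hR).parent v with
  | none => exact absurd ((parent_ofForestOrder_eq_none_iff hR).mp hp u huv) hne
  | some p =>
    obtain ⟨hpv, hpne, hmax⟩ := parentOfRel_spec hp
    have hpeq := hR.filter_eq_erase_of_max hpv hpne hmax
    have hup : R u p := by
      have : u ∈ univ.filter (R · p) := by rw [hpeq]; simpa using ⟨hne, huv⟩
      simpa using this
    have hsub : univ.filter (R · u) = univ.filter (R · p) := by
      refine eq_of_subset_of_card_le (fun w hw => ?_) ?_
      · simp only [mem_filter, mem_univ, true_and] at hw ⊢
        exact hR.trans hw hup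
      · have := (ofForestOrder hR).depth_parent v p hp
        simp only [depth_ofForestOrder] at hd this
        omega
    have hpu : R p u := by
      have : p ∈ univ.filter (R · u) := by rw [hsub]; simpa using hR.refl p
      simpa using this
    rw [hR.antisymm hpu hup]

lemma isTree_ofForestOrder {r : V} (hr : ∀ v, R r v) : (ofForestOrder hR).IsTree := by
  refine ⟨r, (parent_ofForestOrder_eq_none_iff hR).mpr fun u hu => hR.antisymm hu (hr u),
    fun r' hr' => ?_⟩
  exact ((parent_ofForestOrder_eq_none_iff hR).mp hr' r (hr r')).symm

end RootedForest

section TopPath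

open RootedForest

variable {V : Type}

/-- The order that places `S` on top as a path, increasing in `e`, above the order `R₀` on the
remaining vertices. -/
def topPathRel {α : Type} [LinearOrder α] (S : Finset V) (e : V → α) (R₀ : V → V → Prop)
    (u v : V) : Prop :=
  (u ∈ S ∧ (v ∈ S → e u ≤ e v)) ∨ (u ∉ S ∧ v ∉ S ∧ R₀ u v)

variable {α : Type} [LinearOrder α] {S : Finset V} {e : V → α} {R₀ : V → V → Prop}

lemma IsForestOrder.topPathRel (hR₀ : IsForestOrder R₀) (he : Set.InjOn e S) :
    IsForestOrder (topPathRel S e R₀) where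
  refl v := by
    by_cases hv : v ∈ S
    exacts [Or.inl ⟨hv, fun _ => le_rfl⟩, Or.inr ⟨hv, hv, hR₀.refl v⟩]
  trans := by
    rintro u v w (⟨hu, huv⟩ | ⟨hu, hv, huv⟩) (⟨hv', hvw⟩ | ⟨hv', hw, hvw⟩)
    · exact Or.inl ⟨hu, fun hw => (huv hv').trans (hvw hw)⟩
    · exact Or.inl ⟨hu, fun hw' => absurd hw' hw⟩
    · exact absurd hv' hv
    · exact Or.inr ⟨hu, hw, hR₀.trans huv hvw⟩
  antisymm := by
    rintro u v (⟨hu, huv⟩ | ⟨hu, hv, huv⟩) (⟨hv', hvu⟩ | ⟨hv', hu', hvu⟩)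
    · exact he hu hv' (le_antisymm (huv hv') (hvu hu))
    · exact absurd hu hu'
    · exact absurd hv' hv
    · exact hR₀.antisymm huv hvu
  total_of_rel := by
    intro u w v huv hwv
    by_cases hu : u ∈ S <;> by_cases hw : w ∈ S
    · rcases le_total (e u) (e w) with h | h
      exacts [Or.inl (Or.inl ⟨hu, fun _ => h⟩), Or.inr (Or.inl ⟨hw, fun _ => h⟩)]
    · exact Or.inl (Or.inl ⟨hu, fun h => absurd h hw⟩)
    · exact Or.inr (Or.inl ⟨hw, fun h => absurd h hu⟩)
    · obtain ⟨-, hv, huv⟩ := huv.resolve_left (fun h => hu h.1)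
      obtain ⟨-, -, hwv⟩ := hwv.resolve_left (fun h => hw h.1)
      exact (hR₀.total_of_rel huv hwv).imp (fun h => Or.inr ⟨hu, hw, h⟩)
        (fun h => Or.inr ⟨hw, hu, h⟩)

variable [Fintype V] (hR₀ : IsForestOrder R₀) (he : Set.InjOn e S)

lemma depth_ofForestOrder_topPathRel_le {v : V} {A : Finset V}
    (hA : ∀ u, u ∈ S ∨ R₀ u v → u ∈ A) : (ofForestOrder (hR₀.topPathRel he)).depth v ≤ #A := by
  rw [depth_ofForestOrder]
  refine card_le_card fun u hu => hA u ?_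
  simp only [mem_filter, mem_univ, true_and] at hu
  rcases hu with ⟨hu, -⟩ | ⟨-, -, hu⟩
  exacts [Or.inl hu, Or.inr hu]

lemma depth_ofForestOrder_topPathRel_le_card {v : V} (hv : v ∈ S) :
    (ofForestOrder (hR₀.topPathRel he)).depth v ≤ #S := by
  rw [depth_ofForestOrder]
  refine card_le_card fun u hu => ?_
  simp only [mem_filter, mem_univ, true_and] at hu
  rcases hu with ⟨hu, -⟩ | ⟨-, hv', -⟩
  exacts [hu, absurd hv hv']

lemma card_lt_depth_ofForestOrder_topPathRel {v : V} (hv : v ∉ S) :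
    #S < (ofForestOrder (hR₀.topPathRel he)).depth v := by
  have hsub : insert v S ⊆ univ.filter (topPathRel S e R₀ · v) := by
    intro u hu
    simp only [mem_insert] at hu
    rcases hu with rfl | hu
    · simpa using (hR₀.topPathRel he).refl u
    · simp only [mem_filter, mem_univ, true_and]
      exact Or.inl ⟨hu, fun h => absurd h hv⟩
  rw [depth_ofForestOrder]
  simpa [card_insert_of_notMem hv] using card_le_card hsub

lemma isTDDecomp_ofForestOrder_topPathRel {G : SimpleGraph V}
    (h : ∀ u v, G.Adj u v → u ∉ S → v ∉ S → R₀ u v ∨ R₀ v u) :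
    IsTDDecomp G (ofForestOrder (hR₀.topPathRel he)) := by
  intro u v huv
  simp only [ancestor_ofForestOrder_iff, topPathRel]
  by_cases hu : u ∈ S <;> by_cases hv : v ∈ S
  · rcases le_total (e u) (e v) with h | h
    exacts [Or.inl (Or.inl ⟨hu, fun _ => h⟩), Or.inr (Or.inl ⟨hv, fun _ => h⟩)]
  · exact Or.inl (Or.inl ⟨hu, fun h => absurd h hv⟩)
  · exact Or.inr (Or.inl ⟨hv, fun h => absurd h hu⟩)
  · exact (h u v huv hu hv).imp (fun h => Or.inr ⟨hu, hv, h⟩) (fun h => Or.inr ⟨hv, hu, h⟩)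

lemma isTree_ofForestOrder_topPathRel (hS : S.Nonempty) :
    (ofForestOrder (hR₀.topPathRel he)).IsTree := by
  obtain ⟨r, hr, hmin⟩ := S.exists_min_image e hS
  exact isTree_ofForestOrder _ fun v => Or.inl ⟨hr, hmin v⟩

/-- The last vertex of the path `S` has both `r₁` and `r₂` as children. -/
lemma topSep_ofForestOrder_topPathRel (hS : S.Nonempty) {r₁ r₂ : V} (hne : r₁ ≠ r₂)
    (hr₁ : r₁ ∉ S) (hr₂ : r₂ ∉ S) (hmin₁ : ∀ u ∉ S, R₀ u r₁ → u = r₁)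
    (hmin₂ : ∀ u ∉ S, R₀ u r₂ → u = r₂) :
    (ofForestOrder (hR₀.topPathRel he)).topSep = S := by
  set F := ofForestOrder (hR₀.topPathRel he)
  obtain ⟨s, hs, hmax⟩ := S.exists_max_image e hS
  have hds : F.depth s = #S :=
    le_antisymm (depth_ofForestOrder_topPathRel_le_card hR₀ he hs) (card_le_card fun u hu => by
      simp only [mem_filter, mem_univ, true_and]
      exact Or.inl ⟨hu, fun _ => hmax u hu⟩)
  have hchild : ∀ r ∉ S, (∀ u ∉ S, R₀ u r → u = r) → F.parent r = some s := by
    intro r hr hmin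
    refine parent_ofForestOrder_eq_some _ (Or.inl ⟨hs, fun h => absurd h hr⟩) ?_
    refine le_antisymm ?_ (hds ▸ card_lt_depth_ofForestOrder_topPathRel hR₀ he hr)
    refine hds ▸ (depth_ofForestOrder_topPathRel_le hR₀ he fun u hu => ?_).trans
      (card_insert_le r S)
    by_cases huS : u ∈ S
    · exact mem_insert_of_mem huS
    · exact hmin u huS (hu.resolve_left huS) ▸ mem_insert_self u S
  have hcount : 2 ≤ F.childCount s :=
    one_lt_card.mpr ⟨r₁, by simpa using hchild r₁ hr₁ hmin₁, r₂, by simpa using hchild r₂ hr₂ hmin₂,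
      hne⟩
  have hdepth : ∀ v, F.depth v ≤ #S ↔ v ∈ S := fun v =>
    ⟨fun h => by_contra fun hv => (card_lt_depth_ofForestOrder_topPathRel hR₀ he hv).not_ge h,
      depth_ofForestOrder_topPathRel_le_card hR₀ he⟩
  have hinj : Set.InjOn F.depth {v | F.depth v ≤ F.depth s} := by
    intro u hu w hw hd
    simp only [Set.mem_ofPred_eq, hds, hdepth] at hu hw
    by_contra huw
    rcases le_total (e u) (e w) with h | h
    · exact ((hR₀.topPathRel he).card_filter_lt (Or.inl ⟨hu, fun _ => h⟩) huw).ne hd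
    · exact ((hR₀.topPathRel he).card_filter_lt (Or.inl ⟨hw, fun _ => h⟩) (Ne.symm huw)).ne' hd
  rw [topSep_eq_filter hcount hinj, hds]
  ext v
  simp [hdepth]

end TopPath

section Decomposition

variable {V : Type} {G : SimpleGraph V} {T : RootedForest V}

open RootedForest

lemma IsTDDecomp.isTree (hdec : IsTDDecomp G T) (hconn : G.Connected) : T.IsTree := by
  obtain ⟨r, -, hr⟩ := T.exists_root_ancestor hconn.nonempty.some
  have hstep : ∀ a b, G.Adj a b → T.Ancestor r a → T.Ancestor r b := by
    intro a b hab hra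
    rcases hdec a b hab with hab | hba
    · exact hra.trans hab
    · rcases hra.total hba with hrb | hbr
      · exact hrb
      · exact hbr.eq_of_parent_eq_none hr ▸ T.ancestor_refl r
  have hwalk : ∀ {a b} (w : G.Walk a b), T.Ancestor r a → T.Ancestor r b := by
    intro a b w
    induction w with
    | nil => exact id
    | cons hadj _ ih => exact fun ha => ih (hstep _ _ hadj ha)
  refine ⟨r, hr, fun r' hr' => ?_⟩
  exact ((hwalk (hconn.preconnected r r').some (T.ancestor_refl r)).eq_of_parent_eq_none hr').symm

lemma IsTDDecomp.ancestor_of_walk (hdec : IsTDDecomp G T) {p c : V} (hc : T.parent c = some p)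
    {a b : V} (w : G.Walk a b) (hw : ∀ x ∈ w.support, ¬ T.Ancestor x p)
    (ha : T.Ancestor c a) : T.Ancestor c b := by
  induction w with
  | nil => exact ha
  | @cons a b _ hadj _ ih =>
    refine ih (fun x hx => hw x (List.mem_cons_of_mem a hx)) ?_
    rcases hdec a b hadj with hab | hba
    · exact ha.trans hab
    · rcases ha.total hba with hcb | hbc
      · exact hcb
      · rcases hbc.eq_or_ancestor_of_parent_eq hc with rfl | hbp
        · exact T.ancestor_refl _
        · exact absurd hbp (hw b (by simp))

lemma IsTDDecomp.isABSep_ancestors [Fintype V] (hdec : IsTDDecomp G T) {p c₁ c₂ : V}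
    (hc₁ : T.parent c₁ = some p) (hc₂ : T.parent c₂ = some p) (hne : c₁ ≠ c₂) :
    IsABSep G c₁ c₂ (T.ancestors p) := by
  have hnot : ∀ {c}, T.parent c = some p → c ∉ T.ancestors p := fun hc h => by
    have := (mem_ancestors.mp h).depth_le
    have := T.depth_parent _ _ hc
    omega
  refine ⟨hnot hc₁, hnot hc₂, fun w => ?_⟩
  by_contra! hw
  have h₁₂ := hdec.ancestor_of_walk hc₁ w (fun x hx => by simpa using hw x hx) (T.ancestor_refl _)
  rcases h₁₂.eq_or_ancestor_of_parent_eq hc₂ with h | h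
  · exact hne h
  · exact hnot hc₁ (mem_ancestors.mpr h)

end Decomposition

section Separators

variable {V : Type} {G : SimpleGraph V} {a b : V} {S : Finset V}

lemma spanningCoe_deleteVerts_top_adj {u v : V} :
    ((⊤ : G.Subgraph).deleteVerts ↑S).spanningCoe.Adj u v ↔ u ∉ S ∧ v ∉ S ∧ G.Adj u v := by
  simp

lemma IsABSep.not_reachable (h : IsABSep G a b S) :
    ¬ ((⊤ : G.Subgraph).deleteVerts ↑S).spanningCoe.Reachable a b := by
  rintro ⟨w⟩
  have havoid : ∀ {x y} (w : ((⊤ : G.Subgraph).deleteVerts ↑S).spanningCoe.Walk x y),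
      x ∉ S → ∀ z ∈ w.support, z ∉ S := by
    intro x y w
    induction w with
    | nil => simp
    | cons hadj _ ih =>
      intro hx z hz
      rw [Walk.support_cons, List.mem_cons] at hz
      rcases hz with rfl | hz
      · exact hx
      · exact ih (spanningCoe_deleteVerts_top_adj.mp hadj).2.1 z hz
  obtain ⟨z, hz, hzS⟩ := h.2.2 (w.mapLe (Subgraph.spanningCoe_le _))
  rw [Walk.support_mapLe_eq_support] at hz
  exact havoid w h.1 z hz hzS

lemma IsABSep.exists_minimal (h : IsABSep G a b S) :
    ∃ S' ⊆ S, IsABSep G a b S' ∧ ∀ S'' ⊂ S', ¬ IsABSep G a b S'' := by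
  obtain ⟨S', hS', hmin⟩ := exists_minimal_le_of_wellFoundedLT (IsABSep G a b) S h
  exact ⟨S', hS', hmin.prop, fun S'' hlt hS'' => hlt.2 (hmin.le_of_le hS'' hlt.1)⟩

lemma IsABSep.nonempty (h : IsABSep G a b S) (hG : G.Preconnected) : S.Nonempty := by
  obtain ⟨z, -, hz⟩ := h.2.2 (hG a b).some
  exact ⟨z, hz⟩

end Separators

section Treedepth

open RootedForest

variable {V : Type} [Fintype V] {G : SimpleGraph V} {T : RootedForest V}

lemma treedepth_le (h : IsTDDecomp G T) : treedepth G ≤ T.height :=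
  Nat.sInf_le ⟨T, h, rfl⟩

lemma exists_isTDDecomp_height_eq_treedepth (h : IsTDDecomp G T) :
    ∃ T' : RootedForest V, IsTDDecomp G T' ∧ T'.height = treedepth G :=
  Nat.sInf_mem (s := {h | ∃ T : RootedForest V, IsTDDecomp G T ∧ T.height = h}) ⟨_, T, h, rfl⟩

/-- Two non-adjacent vertices can both sit at the bottom of a path through all the others. -/
lemma exists_isTDDecomp_height_le_card_sub_one {x y : V} (hxy : x ≠ y) (hna : ¬ G.Adj x y) :
    ∃ T : RootedForest V, IsTDDecomp G T ∧ T.height ≤ Fintype.card V - 1 := by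
  set S : Finset V := {x, y}ᶜ
  have he : Set.InjOn (Fintype.equivFin V) S := (Fintype.equivFin V).injective.injOn
  refine ⟨ofForestOrder (isForestOrder_eq.topPathRel he),
    isTDDecomp_ofForestOrder_topPathRel isForestOrder_eq he fun u v huv hu hv => ?_,
    Finset.sup_le fun v _ => ?_⟩
  · simp only [S, mem_compl, mem_insert, mem_singleton, not_not] at hu hv
    rcases hu with rfl | rfl <;> rcases hv with rfl | rfl
    exacts [absurd rfl huv.ne, absurd huv hna, absurd huv.symm hna, absurd rfl huv.ne]
  · have hS : #S + 2 = Fintype.card V := by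
      rw [card_compl, card_pair hxy]
      have := card_le_univ ({x, y} : Finset V)
      rw [card_pair hxy] at this
      omega
    have := (depth_ofForestOrder_topPathRel_le isForestOrder_eq he (A := insert v S)
      fun u hu => hu.elim (mem_insert_of_mem ·) (· ▸ mem_insert_self v S)).trans
      (card_insert_le v S)
    omega

/-- `S` goes on top as a path; below it each vertex hangs under its `T`-ancestors in its component
of `G - S`. -/
theorem IsTDDecomp.exists_topSep_eq (hdec : IsTDDecomp G T) {p : V}
    (htrunk : ∀ v, T.Ancestor v p ∨ T.Ancestor p v) {S : Finset V} {a b : V}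
    (hsep : IsABSep G a b S) (hSp : S ⊆ T.ancestors p) (hne : S.Nonempty) :
    ∃ F : RootedForest V, IsTDDecomp G F ∧ F.IsTree ∧ F.height ≤ T.height ∧ F.topSep = S := by
  set H := ((⊤ : G.Subgraph).deleteVerts ↑S).spanningCoe
  have hR₀ := T.isForestOrder_ancestor_and H.reachable_is_equivalence
  have he : Set.InjOn (Fintype.equivFin V) S := (Fintype.equivFin V).injective.injOn
  obtain ⟨r₁, ⟨hr₁, har₁⟩, hmin₁⟩ :=
    T.exists_minimal_ancestor (P := fun u => u ∉ S ∧ H.Reachable u a) ⟨hsep.1, .refl a⟩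
  obtain ⟨r₂, ⟨hr₂, hbr₂⟩, hmin₂⟩ :=
    T.exists_minimal_ancestor (P := fun u => u ∉ S ∧ H.Reachable u b) ⟨hsep.2.1, .refl b⟩
  have hr₁₂ : r₁ ≠ r₂ := by
    rintro rfl
    exact hsep.not_reachable (har₁.symm.trans hbr₂)
  refine ⟨ofForestOrder (hR₀.topPathRel he), ?_, isTree_ofForestOrder_topPathRel hR₀ he hne, ?_,
    topSep_ofForestOrder_topPathRel hR₀ he hne hr₁₂ hr₁ hr₂
      (fun u hu h => hmin₁ u ⟨hu, h.2.trans har₁⟩ h.1)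
      (fun u hu h => hmin₂ u ⟨hu, h.2.trans hbr₂⟩ h.1)⟩
  · refine isTDDecomp_ofForestOrder_topPathRel hR₀ he fun u v huv hu hv => ?_
    have hH : H.Adj u v := spanningCoe_deleteVerts_top_adj.mpr ⟨hu, hv, huv⟩
    exact (hdec u v huv).imp (fun h => ⟨h, hH.reachable⟩) (fun h => ⟨h, hH.symm.reachable⟩)
  · refine Finset.sup_le fun v _ => ?_
    obtain ⟨w, hw⟩ : ∃ w, ∀ u, u ∈ S ∨ T.Ancestor u v → T.Ancestor u w := by
      rcases htrunk v with hvp | hpv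
      · refine ⟨p, fun u hu => hu.elim (fun hu => mem_ancestors.mp (hSp hu)) (·.trans hvp)⟩
      · refine ⟨v, fun u hu => hu.elim (fun hu => (mem_ancestors.mp (hSp hu)).trans hpv) id⟩
    refine (depth_ofForestOrder_topPathRel_le hR₀ he fun u hu => mem_ancestors.mpr
      (hw u (hu.imp_right And.left))).trans ((card_ancestors w).trans_le (T.depth_le_height w))

end Treedepth

/-- For a connected finite simple graph `G` that is not complete,
there exists an optimal treedepth decomposition `T` of `G` (a rooted tree of
height `td(G)`) whose top separator `ts(T)` is a minimal separator of `G`. -/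
theorem statement5 {V : Type} [Fintype V] (G : SimpleGraph V)
    (hconn : G.Connected) (hG : G ≠ ⊤) :
    ∃ T : RootedForest V, IsTDDecomp G T ∧ T.IsTree ∧ T.height = treedepth G ∧
      IsMinSep G T.topSep := by
  obtain ⟨x, y, hxy, hna⟩ : ∃ x y, x ≠ y ∧ ¬ G.Adj x y := by
    by_contra! h
    exact hG (eq_top_iff.mpr fun u v huv => h u v huv)
  obtain ⟨T₁, hT₁, hT₁h⟩ := exists_isTDDecomp_height_le_card_sub_one hxy hna
  obtain ⟨T, hdec, hT⟩ := exists_isTDDecomp_height_eq_treedepth hT₁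
  have htree := hdec.isTree hconn
  obtain ⟨p, hp, htrunk⟩ := htree.exists_branching_trunk <| by
    by_contra! h
    have := htree.height_eq_card fun w => Nat.le_of_lt_succ (h w)
    have := treedepth_le hT₁
    have := Fintype.card_pos_iff.mpr hconn.nonempty
    omega
  obtain ⟨c₁, c₂, hne, hc₁, hc₂⟩ := RootedForest.exists_ne_of_two_le_childCount hp
  obtain ⟨S, hSp, hsep, hmin⟩ := (hdec.isABSep_ancestors hc₁ hc₂ hne).exists_minimal
  obtain ⟨F, hF, hFtree, hFh, rfl⟩ :=
    hdec.exists_topSep_eq htrunk hsep hSp (hsep.nonempty hconn.preconnected)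
  exact ⟨F, hF, hFtree, le_antisymm (hFh.trans hT.le) (treedepth_le hF), c₁, c₂, hsep, hmin⟩

end
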